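/- In a Wm-group G, (r⁻¹)⁻¹ = r for every r in G. -/
import Mathlib


/-- A Wm-group: a set with a binary operation `mul`, a right identity `bra r` (written `[r]`),
a left inverse `inv r` (written `r⁻¹`), and for each `m, r` a unique solution `ldiv m r`
(written `m⁻¹ * r`) of the equation `m * z = r`. -/
class WmGroup (G : Type*) where
  mul : G → G → G
  bra : G → G
  inv : G → G
  ldiv : G → G → G
  semi : ∀ r m n : G, mul r (mul m n) = mul m (mul r n)
  mul_bra : ∀ r : G, mul r (bra r) = r
  inv_mul : ∀ r : G, mul (inv r) r = bra r
  inv_mul_bra : ∀ r : G, mul (inv r) (bra r) = inv r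
  mul_ldiv : ∀ m r : G, mul m (ldiv m r) = r
  ldiv_unique : ∀ m r z : G, mul m z = r → z = ldiv m r

open WmGroup

lemma wm_cancel {G : Type*} [WmGroup G] (m a b : G) (h : mul m a = mul m b) : a = b := by
  rw [ldiv_unique m (mul m a) a rfl, ldiv_unique m (mul m b) b rfl, h]

lemma wm_mul_inv {G : Type*} [WmGroup G] (r : G) : mul r (inv r) = bra r := by
  have h := semi (inv r) r (bra r)
  rw [mul_bra, inv_mul_bra, inv_mul] at h
  exact h.symm

lemma wm_bra_inv {G : Type*} [WmGroup G] (r : G) : bra (inv r) = bra r := by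
  apply wm_cancel (inv r)
  rw [mul_bra, inv_mul_bra]

theorem wm_inv_inv {G : Type*} [WmGroup G] (r : G) : inv (inv r) = r := by
  apply wm_cancel (inv r)
  rw [wm_mul_inv (inv r), wm_bra_inv, inv_mul]
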